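/- arXiv:2303.10242 — 2 statements merged into one kernel-verified Lean document; each statement's English description precedes it below -/
import Mathlib

section
/- There exist γ₀ > 0 and a constant C₁ > 0, and for every multi-index k ∈ ℕ₀³ a constant C₂ > 0 (depending on k), such that uniformly over γ ∈ (0,γ₀), ω ∈ [−N−1/2, N+1/2]³ and j ∈ {1,2,3}: (i) |K̂_γ(ω)| ≤ 1; (ii) |∂_j K̂_γ(ω)| ≤ C₁ γ³ (|γ³ω| ∧ 1); (iii) |D^k K̂_γ(ω)| ≤ C₂ γ^{3|k|₁}. -/
open scoped BigOperators
open Filter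

noncomputable section

abbrev V : Type := Fin 3 → ℝ
abbrev VZ : Type := Fin 3 → ℤ

/-- The Euclidean norm on `ℝ³`. -/
def euclNorm (x : V) : ℝ := Real.sqrt (∑ i, x i ^ 2)

/-- The embedding of `ℤ³` into `ℝ³`. -/
def toV (k : VZ) : V := fun i => (k i : ℝ)

/-- `N = ⌊γ⁻⁴⌋`. -/
def Ndef (γ : ℝ) : ℕ := ⌊γ⁻¹ ^ 4⌋₊

/-- `ε = 2/(2N+1)`. -/
def eps (γ : ℝ) : ℝ := 2 / (2 * (Ndef γ : ℝ) + 1)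

/-- `𝔢 = ε/γ`. -/
def frke (γ : ℝ) : ℝ := eps γ / γ

/-- `κ_{γ,3} = ε/γ⁴`. -/
def kappa3 (γ : ℝ) : ℝ := eps γ / γ ^ 4

/-- `κ_{γ,1}`, defined by `κ_{γ,1}⁻¹ = ∑_{k ∈ ℤ³} γ³ 𝔎(γk)`. -/
def kappa1 (K : V → ℝ) (γ : ℝ) : ℝ :=
  (∑ᶠ (k : VZ), γ ^ 3 * K (fun i => γ * (k i : ℝ)))⁻¹

/-- The discrete Fourier transform `K̂_γ` of the Kac kernel, extended to all `ω ∈ ℝ³`: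
`K̂_γ(ω) = κ_{γ,1} ∑_{k ∈ ℤ³} γ³ 𝔎(γk) cos(π γ³ ω·(γk))`. -/
def Khat (K : V → ℝ) (γ : ℝ) (ω : V) : ℝ :=
  kappa1 K γ *
    ∑ᶠ (k : VZ), γ ^ 3 * K (fun i => γ * (k i : ℝ)) *
      Real.cos (Real.pi * γ ^ 3 * ∑ i, ω i * (γ * (k i : ℝ)))

/-- The standing assumptions on the Kac interaction kernel `𝔎 : ℝ³ → [0,1]`: smooth,
compactly supported in `B(0, r⋆)`, rotation invariant, `𝔎(0) = 0`, `∫ 𝔎 = 1` and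
`∫ 𝔎(x)|x|² dx = 6`. -/
structure KacKernel (rstar : ℝ) (K : V → ℝ) : Prop where
  smooth : ∀ n : ℕ, ContDiff ℝ n K
  nonneg : ∀ x, 0 ≤ K x
  le_one : ∀ x, K x ≤ 1
  support_ball : ∀ x, rstar ≤ euclNorm x → K x = 0
  rot_inv : ∀ x y, euclNorm x = euclNorm y → K x = K y
  zero_at_zero : K 0 = 0
  integral_one : (∫ x : V, K x) = 1
  integral_sq : (∫ x : V, K x * euclNorm x ^ 2) = 6

/-- The cube `{ω ∈ ℤ³ : |ω|_∞ ≤ N}`. -/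
def ibox (N : ℕ) : Finset VZ := Fintype.piFinset fun _ => Finset.Icc (-(N : ℤ)) (N : ℤ)

/-- The punctured cube `{ω ∈ ℤ³ : 0 < |ω|_∞ ≤ N}`. -/
def iboxS (N : ℕ) : Finset VZ := (ibox N).erase 0

/-- The partial derivative `∂_j f` of a function on `ℝ³`. -/
def pd (j : Fin 3) (f : V → ℝ) : V → ℝ := fun ω => fderiv ℝ f ω (Pi.single j 1)

/-- The mixed derivative `D^k = ∂₁^{k₁}∂₂^{k₂}∂₃^{k₃}` for a multi-index `k ∈ ℕ₀³`. -/
def Dmulti (k : Fin 3 → ℕ) (f : V → ℝ) : V → ℝ :=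
  (pd 0)^[k 0] ((pd 1)^[k 1] ((pd 2)^[k 2] f))

/-!
Only the finitely many lattice points `γk` in the support of `𝔎` contribute, so `K̂_γ` is a
convex combination `∑ c_k cos ⟨a_k, ω⟩` of cosines whose frequencies `a_k = π γ³ (γk)` have
Euclidean length below `π r⋆ γ³`. Differentiating such a sum multiplies each term by a
coordinate of its frequency and shifts its phase by `π/2`, which gives
`|D^k K̂_γ| ≤ (π r⋆ γ³)^{|k|₁}`; for a single derivative the shifted cosine is a sine, and
`|sin t| ≤ min |t| 1` yields the factor `|γ³ω| ∧ 1`. The weights sum to one as soon as the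
normalising sum `κ_{γ,1}⁻¹` is positive, i.e. once `γ` is so small that some lattice point
falls where `𝔎 > 0`; this fixes `γ₀`.
-/

theorem euclNorm_nonneg (x : V) : 0 ≤ euclNorm x := Real.sqrt_nonneg _

theorem euclNorm_single (j : Fin 3) : euclNorm (Pi.single j 1) = 1 := by
  simp [euclNorm, Pi.single_apply]

theorem abs_apply_le_euclNorm (x : V) (i : Fin 3) : |x i| ≤ euclNorm x := by
  rw [← Real.sqrt_sq_eq_abs]
  exact Real.sqrt_le_sqrt (Finset.single_le_sum (f := fun j => x j ^ 2)
    (fun j _ => sq_nonneg _) (Finset.mem_univ i))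

theorem abs_dotProduct_le_euclNorm_mul (x y : V) : |x ⬝ᵥ y| ≤ euclNorm x * euclNorm y := by
  rw [← Real.sqrt_sq_eq_abs, euclNorm, euclNorm, ← Real.sqrt_mul (by positivity)]
  exact Real.sqrt_le_sqrt (Finset.sum_mul_sq_le_sq_mul_sq Finset.univ x y)

theorem min_mul_le_max_mul_min (b x : ℝ) (hx : 0 ≤ x) : min (b * x) 1 ≤ max b 1 * min x 1 := by
  rcases le_total x 1 with h | h
  · rw [min_eq_left h]
    exact (min_le_left _ _).trans (mul_le_mul_of_nonneg_right (le_max_left _ _) hx)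
  · rw [min_eq_right h, mul_one]
    exact (min_le_right _ _).trans (le_max_right _ _)

section CosineSums

open Real

variable {ι E : Type*} [NormedAddCommGroup E] [NormedSpace ℝ E]

def cosSum (s : Finset ι) (c : ι → ℝ) (ℓ : ι → E →L[ℝ] ℝ) (t : ℝ) (x : E) : ℝ :=
  ∑ i ∈ s, c i * cos (ℓ i x + t)

variable (s : Finset ι) (c : ι → ℝ) (ℓ : ι → E →L[ℝ] ℝ) (t : ℝ)

theorem hasFDerivAt_cosSum (x : E) :
    HasFDerivAt (cosSum s c ℓ t) (∑ i ∈ s, (c i * -sin (ℓ i x + t)) • ℓ i) x := by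
  have hsum : cosSum s c ℓ t = ∑ i ∈ s, fun y => c i * cos (ℓ i y + t) := by
    funext y
    simp [cosSum, Finset.sum_apply]
  rw [hsum]
  refine HasFDerivAt.sum fun i _ => ?_
  simpa only [smul_smul] using
    (((ℓ i).hasFDerivAt (x := x)).add_const t).cos.const_mul (c i)

theorem fderiv_cosSum_apply (x v : E) :
    fderiv ℝ (cosSum s c ℓ t) x v = cosSum s (fun i => ℓ i v * c i) ℓ (t + π / 2) x := by
  rw [(hasFDerivAt_cosSum s c ℓ t x).fderiv, cosSum, FunLike.coe_sum, Finset.sum_apply]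
  refine Finset.sum_congr rfl fun i _ => ?_
  rw [smul_apply, smul_eq_mul, ← add_assoc, cos_add_pi_div_two]
  ring

theorem abs_cosSum_le (x : E) : |cosSum s c ℓ t x| ≤ ∑ i ∈ s, |c i| := by
  refine (Finset.abs_sum_le_sum_abs _ _).trans (Finset.sum_le_sum fun i _ => ?_)
  rw [abs_mul]
  exact mul_le_of_le_one_right (abs_nonneg _) (abs_cos_le_one _)

end CosineSums

section CosineSumDerivatives

open Real

variable {ι : Type*} (s : Finset ι) (c : ι → ℝ) (ℓ : ι → V →L[ℝ] ℝ) (t : ℝ)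

theorem pd_cosSum (j : Fin 3) :
    pd j (cosSum s c ℓ t) = cosSum s (fun i => ℓ i (Pi.single j 1) * c i) ℓ (t + π / 2) :=
  funext fun x => fderiv_cosSum_apply s c ℓ t x _

theorem pd_iterate_cosSum (j : Fin 3) (n : ℕ) :
    (pd j)^[n] (cosSum s c ℓ t)
      = cosSum s (fun i => ℓ i (Pi.single j 1) ^ n * c i) ℓ (t + n * (π / 2)) := by
  induction n generalizing c t with
  | zero => simp
  | succ n ih =>
    rw [Function.iterate_succ_apply, pd_cosSum, ih]
    congr 1
    · funext i; ring
    · push_cast; ring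

theorem Dmulti_cosSum (m : Fin 3 → ℕ) :
    Dmulti m (cosSum s c ℓ t)
      = cosSum s (fun i => ℓ i (Pi.single 0 1) ^ m 0 * (ℓ i (Pi.single 1 1) ^ m 1 *
          (ℓ i (Pi.single 2 1) ^ m 2 * c i))) ℓ
          (t + m 2 * (π / 2) + m 1 * (π / 2) + m 0 * (π / 2)) := by
  rw [Dmulti, pd_iterate_cosSum, pd_iterate_cosSum, pd_iterate_cosSum]

variable {s ℓ} {B : ℝ} (hℓ : ∀ i ∈ s, ∀ x, |ℓ i x| ≤ B * euclNorm x)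
include hℓ

theorem abs_pd_cosSum_le (j : Fin 3) (x : V) :
    |pd j (cosSum s c ℓ 0) x| ≤ B * min (B * euclNorm x) 1 * ∑ i ∈ s, |c i| := by
  rw [pd_cosSum, Finset.mul_sum]
  refine (Finset.abs_sum_le_sum_abs _ _).trans (Finset.sum_le_sum fun i hi => ?_)
  have hcoord : |ℓ i (Pi.single j 1)| ≤ B := by
    simpa [euclNorm_single] using hℓ i hi (Pi.single j 1)
  have hsin : |sin (ℓ i x)| ≤ min (B * euclNorm x) 1 :=
    le_min (abs_sin_le_abs.trans (hℓ i hi x)) (abs_sin_le_one _)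
  rw [zero_add, cos_add_pi_div_two, abs_mul, abs_neg, abs_mul]
  calc |ℓ i (Pi.single j 1)| * |c i| * |sin (ℓ i x)|
      ≤ B * |c i| * min (B * euclNorm x) 1 :=
        mul_le_mul (mul_le_mul_of_nonneg_right hcoord (abs_nonneg _)) hsin (abs_nonneg _)
          (mul_nonneg ((abs_nonneg _).trans hcoord) (abs_nonneg _))
    _ = B * min (B * euclNorm x) 1 * |c i| := by ring

theorem abs_Dmulti_cosSum_le (m : Fin 3 → ℕ) (x : V) :
    |Dmulti m (cosSum s c ℓ t) x| ≤ B ^ (m 0 + m 1 + m 2) * ∑ i ∈ s, |c i| := by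
  rw [Dmulti_cosSum, Finset.mul_sum]
  refine (abs_cosSum_le _ _ _ _ x).trans (Finset.sum_le_sum fun i hi => ?_)
  have hcoord : ∀ j, |ℓ i (Pi.single j 1)| ≤ B := fun j => by
    simpa [euclNorm_single] using hℓ i hi (Pi.single j 1)
  have hB : 0 ≤ B := (abs_nonneg _).trans (hcoord 0)
  simp only [abs_mul, abs_pow]
  calc |ℓ i (Pi.single 0 1)| ^ m 0 * (|ℓ i (Pi.single 1 1)| ^ m 1 *
        (|ℓ i (Pi.single 2 1)| ^ m 2 * |c i|))
      ≤ B ^ m 0 * (B ^ m 1 * (B ^ m 2 * |c i|)) := by gcongr <;> exact hcoord _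
    _ = B ^ (m 0 + m 1 + m 2) * |c i| := by rw [pow_add, pow_add]; ring

end CosineSumDerivatives

def dotCLM (a : V) : V →L[ℝ] ℝ := LinearMap.toContinuousLinearMap (dotProductBilin ℝ ℝ a)

theorem dotCLM_apply (a x : V) : dotCLM a x = a ⬝ᵥ x := rfl

theorem exists_dist_lattice_le (x : V) {γ : ℝ} (hγ : 0 < γ) :
    ∃ k : VZ, dist (fun i => γ * (k i : ℝ)) x ≤ γ / 2 := by
  refine ⟨fun i => round (x i / γ), (dist_pi_le_iff (by positivity)).2 fun i => ?_⟩
  have hround : γ * (round (x i / γ) : ℝ) - x i = -(γ * (x i / γ - round (x i / γ))) := by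
    field_simp
    ring
  rw [Real.dist_eq, hround, abs_neg, abs_mul, abs_of_pos hγ]
  nlinarith [abs_sub_round (x i / γ)]

namespace KacKernel

variable {rstar : ℝ} {K : V → ℝ} (hK : KacKernel rstar K)
include hK

theorem exists_pos : ∃ x, 0 < K x := by
  by_contra! h
  have hzero : K = 0 := funext fun x => le_antisymm (h x) (hK.nonneg x)
  simpa [hzero] using hK.integral_one

theorem euclNorm_lt {x : V} (hx : K x ≠ 0) : euclNorm x < rstar :=
  lt_of_not_ge fun h => hx (hK.support_ball x h)

theorem rstar_pos : 0 < rstar := by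
  obtain ⟨x, hx⟩ := hK.exists_pos
  exact (euclNorm_nonneg x).trans_lt (hK.euclNorm_lt hx.ne')

theorem exists_lattice_pos :
    ∃ γ₀ > 0, ∀ γ ∈ Set.Ioo 0 γ₀, ∃ k : VZ, 0 < K (fun i => γ * (k i : ℝ)) := by
  obtain ⟨x, hx⟩ := hK.exists_pos
  obtain ⟨δ, hδ, hball⟩ := Metric.eventually_nhds_iff.1
    ((hK.smooth 0).continuous.continuousAt.eventually (lt_mem_nhds hx))
  refine ⟨δ, hδ, fun γ hγ => ?_⟩
  obtain ⟨k, hk⟩ := exists_dist_lattice_le x hγ.1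
  exact ⟨k, hball (hk.trans_lt (by linarith [hγ.1, hγ.2]))⟩

theorem finite_support_lattice {γ : ℝ} (hγ : 0 < γ) :
    (Function.support fun k : VZ => K (fun i => γ * (k i : ℝ))).Finite := by
  refine (ibox ⌈rstar / γ⌉₊).finite_toSet.subset fun k hk => ?_
  rw [Finset.mem_coe, ibox, Fintype.mem_piFinset]
  intro i
  have hcoord : γ * |(k i : ℝ)| < rstar := by
    simpa [abs_mul, abs_of_pos hγ] using
      (abs_apply_le_euclNorm _ i).trans_lt (hK.euclNorm_lt hk)
  have hceil : (|k i| : ℝ) ≤ ⌈rstar / γ⌉₊ :=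
    ((lt_div_iff₀' hγ).2 (by exact_mod_cast hcoord)).le.trans (Nat.le_ceil _)
  rw [Finset.mem_Icc, ← abs_le]
  exact_mod_cast hceil

theorem exists_Khat_eq_cosSum {γ : ℝ} (hγ : 0 < γ)
    (hpos : ∃ k : VZ, 0 < K (fun i => γ * (k i : ℝ))) :
    ∃ (s : Finset VZ) (c : VZ → ℝ) (ℓ : VZ → V →L[ℝ] ℝ), Khat K γ = cosSum s c ℓ 0 ∧
      ∑ k ∈ s, |c k| = 1 ∧ ∀ k ∈ s, ∀ x, |ℓ k x| ≤ Real.pi * rstar * γ ^ 3 * euclNorm x := by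
  set s := (hK.finite_support_lattice hγ).toFinset
  have hs : ∀ k, k ∈ s ↔ K (fun i => γ * (k i : ℝ)) ≠ 0 := fun k => by simp [s]
  have hfinsum : ∀ f : VZ → ℝ, (∀ k, K (fun i => γ * (k i : ℝ)) = 0 → f k = 0) →
      ∑ᶠ k, f k = ∑ k ∈ s, f k :=
    fun f hf => finsum_eq_sum_of_support_subset f fun k hk => (hs k).2 fun h0 => hk (hf k h0)
  set w : VZ → ℝ := fun k => γ ^ 3 * K (fun i => γ * (k i : ℝ))
  have hw : ∀ k, 0 ≤ w k := fun k => mul_nonneg (by positivity) (hK.nonneg _)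
  have hW : 0 < ∑ k ∈ s, w k := by
    obtain ⟨k, hk⟩ := hpos
    exact Finset.sum_pos' (fun k _ => hw k) ⟨k, (hs k).2 hk.ne', mul_pos (by positivity) hk⟩
  have hκ : kappa1 K γ = (∑ k ∈ s, w k)⁻¹ := by
    rw [kappa1, hfinsum _ fun k hk => by simp [hk]]
  refine ⟨s, fun k => kappa1 K γ * w k,
    fun k => (Real.pi * γ ^ 3) • dotCLM (fun i => γ * (k i : ℝ)), ?_, ?_, ?_⟩
  · funext ω
    rw [Khat, hfinsum _ fun k hk => by simp [hk], Finset.mul_sum, cosSum]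
    refine Finset.sum_congr rfl fun k _ => ?_
    rw [smul_apply, dotCLM_apply, dotProduct_comm, smul_eq_mul, add_zero]
    exact (mul_assoc _ _ _).symm
  · have hκnn : 0 ≤ kappa1 K γ := hκ ▸ inv_nonneg.2 hW.le
    simp_rw [abs_of_nonneg (mul_nonneg hκnn (hw _))]
    rw [← Finset.mul_sum, hκ, inv_mul_cancel₀ hW.ne']
  · intro k hk x
    have hnorm := hK.euclNorm_lt ((hs k).1 hk)
    rw [smul_apply, dotCLM_apply, smul_eq_mul, abs_mul,
      abs_of_pos (by positivity)]
    calc Real.pi * γ ^ 3 * |(fun i => γ * (k i : ℝ)) ⬝ᵥ x|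
        ≤ Real.pi * γ ^ 3 * (euclNorm (fun i => γ * (k i : ℝ)) * euclNorm x) := by
          gcongr; exact abs_dotProduct_le_euclNorm_mul _ _
      _ ≤ Real.pi * γ ^ 3 * (rstar * euclNorm x) := by
          gcongr; exact euclNorm_nonneg x
      _ = Real.pi * rstar * γ ^ 3 * euclNorm x := by ring

end KacKernel

theorem Khat_derivative_bounds_general (rstar : ℝ)
    (K : V → ℝ) (hK : KacKernel rstar K) :
    ∃ γ₀ > (0 : ℝ), ∃ C₁ > (0 : ℝ), ∀ k : Fin 3 → ℕ, ∃ C₂ > (0 : ℝ),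
      ∀ γ ∈ Set.Ioo (0 : ℝ) γ₀, ∀ ω : V, (∀ i, |ω i| ≤ (Ndef γ : ℝ) + 1 / 2) →
        |Khat K γ ω| ≤ 1 ∧
          (∀ j : Fin 3,
            |pd j (Khat K γ) ω| ≤ C₁ * γ ^ 3 * min (γ ^ 3 * euclNorm ω) 1) ∧
            |Dmulti k (Khat K γ) ω| ≤ C₂ * γ ^ (3 * (k 0 + k 1 + k 2)) := by
  obtain ⟨γ₀, hγ₀, hlattice⟩ := hK.exists_lattice_pos
  have hr := hK.rstar_pos
  refine ⟨γ₀, hγ₀, Real.pi * rstar * max (Real.pi * rstar) 1, by positivity,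
    fun m => ⟨(Real.pi * rstar) ^ (m 0 + m 1 + m 2), by positivity, ?_⟩⟩
  rintro γ hγ ω -
  have hγ0 : 0 < γ := hγ.1
  obtain ⟨s, c, ℓ, hKhat, hc, hℓ⟩ := hK.exists_Khat_eq_cosSum hγ0 (hlattice γ hγ)
  have hγω : 0 ≤ γ ^ 3 * euclNorm ω := mul_nonneg (by positivity) (euclNorm_nonneg ω)
  rw [hKhat]
  refine ⟨(abs_cosSum_le s c ℓ 0 ω).trans_eq hc, fun j => ?_, ?_⟩
  · calc |pd j (cosSum s c ℓ 0) ω|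
        ≤ Real.pi * rstar * γ ^ 3 * min (Real.pi * rstar * γ ^ 3 * euclNorm ω) 1 := by
          simpa [hc] using abs_pd_cosSum_le c hℓ j ω
      _ ≤ Real.pi * rstar * γ ^ 3 * (max (Real.pi * rstar) 1 * min (γ ^ 3 * euclNorm ω) 1) := by
          refine mul_le_mul_of_nonneg_left ?_ (by positivity)
          rw [mul_assoc]
          exact min_mul_le_max_mul_min _ _ hγω
      _ = _ := by ring
  · calc |Dmulti m (cosSum s c ℓ 0) ω| ≤ (Real.pi * rstar * γ ^ 3) ^ (m 0 + m 1 + m 2) := by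
          simpa [hc] using abs_Dmulti_cosSum_le c 0 hℓ m ω
      _ = _ := by rw [mul_pow, ← pow_mul, mul_comm 3]

/-- Uniform bounds for `K̂_γ` and its derivatives on
`[−N−1/2, N+1/2]³`: `|K̂_γ(ω)| ≤ 1`, `|∂_j K̂_γ(ω)| ≤ C₁ γ³(|γ³ω| ∧ 1)` and
`|D^k K̂_γ(ω)| ≤ C₂ γ^{3|k|₁}`. -/
theorem Khat_derivative_bounds (rstar : ℝ) (hrstar : 0 < rstar)
    (K : V → ℝ) (hK : KacKernel rstar K) :
    ∃ γ₀ > (0 : ℝ), ∃ C₁ > (0 : ℝ), ∀ k : Fin 3 → ℕ, ∃ C₂ > (0 : ℝ),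
      ∀ γ ∈ Set.Ioo (0 : ℝ) γ₀, ∀ ω : V, (∀ i, |ω i| ≤ (Ndef γ : ℝ) + 1 / 2) →
        |Khat K γ ω| ≤ 1 ∧
          (∀ j : Fin 3,
            |pd j (Khat K γ) ω| ≤ C₁ * γ ^ 3 * min (γ ^ 3 * euclNorm ω) 1) ∧
            |Dmulti k (Khat K γ) ω| ≤ C₂ * γ ^ (3 * (k 0 + k 1 + k 2)) :=
  Khat_derivative_bounds_general rstar K hK
end
end

section
/- For every multi-index k ∈ ℕ₀³ and every m ∈ ℕ₀ there exist a constant C > 0 and γ₀ > 0 such that |γ³ω|^{2m} · |D^k K̂_γ(ω)| ≤ C γ^{3|k|₁} uniformly over γ ∈ (0,γ₀) and ω ∈ [−N−1/2, N+1/2]³ (polynomial decay of all derivatives of the Fourier transform of the Kac kernel on the scale |ω| ≳ γ⁻³). -/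
open scoped BigOperators
open Filter

noncomputable section

/-!
Write `D^α K̂_γ(ω) = κ_{γ,1} γ³ (πγ³)^{|α|} ∑_k G(γk) cos(πγ⁴ ω·k + φ)` with `G(x) = x^α 𝔎(x)`.
Summation by parts in direction `j` trades the weight `(2 - 2 cos(πγ⁴ω_j))^m` for the `m`-th
second difference of step `γ` of `G`, which is `O(γ^{2m})` because `G` is smooth with compact
support. Only `O(γ⁻³)` terms of the sum are nonzero, which the factor `γ³` absorbs, and `κ_{γ,1}`
stays bounded because `∑_k γ³ 𝔎(γk)` is a Riemann sum of a continuous kernel that is positive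
somewhere. On the cube `|ω|_∞ ≤ N + 1/2` the phase `πγ⁴ω_j` stays below `7/2`, where
`2 - 2 cos θ ≳ θ²`; taking `j` with `|ω_j|` maximal gives `(γ⁴|ω|)^{2m} ≲ (2 - 2 cos(πγ⁴ω_j))^m`.
-/

open Real Matrix Function Metric

section SecondDifference

variable {G : Type*} [AddGroup G]

/-- The sign is chosen so that `secondDiff v` acts on `x ↦ cos (θ x + φ)`, for additive `θ`,
as multiplication by `2 - 2 cos (θ v) ≥ 0`. -/
def secondDiff (v : G) (u : G → ℝ) : G → ℝ := fun x => 2 * u x - u (x - v) - u (x + v)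

theorem secondDiff_comp {H : Type*} [AddGroup H] (f : G →+ H) (v : G) (u : H → ℝ) :
    secondDiff v (u ∘ f) = secondDiff (f v) u ∘ f := by
  ext x
  simp [secondDiff, map_sub, map_add]

theorem iterate_secondDiff_comp {H : Type*} [AddGroup H] (f : G →+ H) (v : G) (m : ℕ)
    (u : H → ℝ) : (secondDiff v)^[m] (u ∘ f) = (secondDiff (f v))^[m] u ∘ f :=
  ((Semiconj.iterate_right (f := (· ∘ f)) (fun u => (secondDiff_comp f v u).symm) m) u).symm

theorem Function.HasFiniteSupport.secondDiff {u : G → ℝ} (hu : u.HasFiniteSupport) (v : G) :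
    (secondDiff v u).HasFiniteSupport := by
  have hsub : HasFiniteSupport fun x => u (x - v) := hu.comp_of_injective (sub_left_injective)
  have hadd : HasFiniteSupport fun x => u (x + v) := hu.comp_of_injective (add_left_injective v)
  exact ((HasFiniteSupport.fun_mul_right (fun _ => (2 : ℝ)) hu).fun_sub hsub).fun_sub hadd

theorem Function.HasFiniteSupport.iterate_secondDiff {u : G → ℝ} (hu : u.HasFiniteSupport) (v : G)
    (m : ℕ) : ((_root_.secondDiff v)^[m] u).HasFiniteSupport := by
  induction m with
  | zero => exact hu
  | succ m ih => rw [iterate_succ_apply']; exact ih.secondDiff v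

theorem support_secondDiff_subset {E : Type*} [SeminormedAddCommGroup E] {u : E → ℝ} {R : ℝ}
    (hu : support u ⊆ closedBall 0 R) (v : E) :
    support (secondDiff v u) ⊆ closedBall 0 (R + ‖v‖) := by
  intro x hx
  by_contra hR
  rw [mem_closedBall_zero_iff, not_le] at hR
  have vanish : ∀ y, R < ‖y‖ → u y = 0 := fun y hy =>
    notMem_support.mp fun h => (mem_closedBall_zero_iff.mp (hu h)).not_gt hy
  apply hx
  simp only [_root_.secondDiff]
  rw [vanish x (by linarith [norm_nonneg v]), vanish (x - v) ?_, vanish (x + v) ?_]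
  · ring
  · linarith [add_sub_cancel_right x v ▸ norm_sub_le (x + v) v]
  · linarith [norm_sub_norm_le x v]

theorem support_iterate_secondDiff_subset {E : Type*} [SeminormedAddCommGroup E] {u : E → ℝ}
    {R : ℝ} (hu : support u ⊆ closedBall 0 R) (v : E) (m : ℕ) :
    support ((secondDiff v)^[m] u) ⊆ closedBall 0 (R + m * ‖v‖) := by
  induction m with
  | zero => simpa using hu
  | succ m ih =>
    rw [iterate_succ_apply']
    refine (support_secondDiff_subset ih v).trans (closedBall_subset_closedBall ?_)
    push_cast
    linarith

end SecondDifference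
section DirectionalDerivative

open scoped ContDiff

variable {E : Type*} [NormedAddCommGroup E] [NormedSpace ℝ E]

def dirDeriv (v : E) (u : E → ℝ) : E → ℝ := fun x => fderiv ℝ u x v

theorem dirDeriv_smul_left (γ : ℝ) (v : E) (u : E → ℝ) :
    dirDeriv (γ • v) u = γ • dirDeriv v u := by
  ext x
  simp [dirDeriv]

theorem dirDeriv_const_smul (γ : ℝ) (v : E) (u : E → ℝ) :
    dirDeriv v (γ • u) = γ • dirDeriv v u := by
  ext x
  simp [dirDeriv, fderiv_const_smul_field]

theorem iterate_dirDeriv_smul_left (γ : ℝ) (v : E) (n : ℕ) (u : E → ℝ) :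
    (dirDeriv (γ • v))^[n] u = γ ^ n • (dirDeriv v)^[n] u := by
  induction n with
  | zero => simp
  | succ n ih =>
    rw [iterate_succ_apply', iterate_succ_apply', ih, dirDeriv_smul_left, dirDeriv_const_smul,
      smul_smul, pow_succ']

theorem ContDiff.dirDeriv {u : E → ℝ} (hu : ContDiff ℝ ∞ u) (v : E) :
    ContDiff ℝ ∞ (_root_.dirDeriv v u) :=
  (hu.fderiv_right le_rfl).clm_apply contDiff_const

theorem ContDiff.iterate_dirDeriv {u : E → ℝ} (hu : ContDiff ℝ ∞ u) (v : E) (n : ℕ) :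
    ContDiff ℝ ∞ ((_root_.dirDeriv v)^[n] u) := by
  induction n with
  | zero => exact hu
  | succ n ih => rw [iterate_succ_apply']; exact ih.dirDeriv v

theorem ContDiff.secondDiff {u : E → ℝ} (hu : ContDiff ℝ ∞ u) (v : E) :
    ContDiff ℝ ∞ (secondDiff v u) := by
  unfold _root_.secondDiff
  have hsub : ContDiff ℝ ∞ fun x => u (x - v) := hu.comp (contDiff_id.sub contDiff_const)
  have hadd : ContDiff ℝ ∞ fun x => u (x + v) := hu.comp (contDiff_id.add contDiff_const)
  exact (contDiff_const.mul hu).sub hsub |>.sub hadd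

theorem dirDeriv_secondDiff {u : E → ℝ} (hu : Differentiable ℝ u) (v w : E) :
    dirDeriv w (secondDiff v u) = secondDiff v (dirDeriv w u) := by
  ext x
  change fderiv ℝ (fun y => 2 * u y - u (y - v) - u (y + v)) x w =
    2 * fderiv ℝ u x w - fderiv ℝ u (x - v) w - fderiv ℝ u (x + v) w
  rw [fderiv_fun_sub (by fun_prop) (by fun_prop), fderiv_fun_sub (by fun_prop) (by fun_prop),
    fderiv_const_mul (hu x), fderiv_comp_sub, fderiv_comp_add_right]
  simp

theorem iterate_dirDeriv_secondDiff {u : E → ℝ} (hu : ContDiff ℝ ∞ u) (v w : E) (n : ℕ) :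
    (dirDeriv w)^[n] (secondDiff v u) = secondDiff v ((dirDeriv w)^[n] u) := by
  induction n with
  | zero => rfl
  | succ n ih =>
    rw [iterate_succ_apply', iterate_succ_apply', ih,
      dirDeriv_secondDiff ((hu.iterate_dirDeriv w n).differentiable (by simp))]

theorem abs_sub_le_of_abs_dirDeriv_le {u : E → ℝ} (hu : Differentiable ℝ u) {v : E} {B : ℝ}
    (hB : ∀ y, |dirDeriv v u y| ≤ B) (x : E) : |u (x + v) - u x| ≤ B := by
  have hline : ∀ t : ℝ, HasDerivAt (fun t => u (x + t • v)) (dirDeriv v u (x + t • v)) t :=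
    fun t => (hu _).hasFDerivAt.comp_hasDerivAt t (((hasDerivAt_id t).smul_const v).const_add x
      |>.congr_deriv (one_smul ℝ v))
  simpa using norm_image_sub_le_of_norm_deriv_le_segment_01'
    (fun t _ => (hline t).hasDerivWithinAt) (fun t _ => hB _)

theorem abs_secondDiff_le {u : E → ℝ} (hu : ContDiff ℝ ∞ u) {v : E} {B : ℝ}
    (hB : ∀ y, |dirDeriv v (dirDeriv v u) y| ≤ B) (x : E) : |secondDiff v u x| ≤ B := by
  have hdiff : Differentiable ℝ u := hu.differentiable (by simp)
  set w : E → ℝ := fun y => u (y + v) - u y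
  have hw : Differentiable ℝ w := by fun_prop
  have hdw : ∀ y, |dirDeriv v w y| ≤ B := fun y => by
    have : dirDeriv v w y = dirDeriv v u (y + v) - dirDeriv v u y := by
      simp only [w, dirDeriv]
      rw [fderiv_fun_sub (by fun_prop) (by fun_prop), fderiv_comp_add_right]
      rfl
    rw [this]
    exact abs_sub_le_of_abs_dirDeriv_le ((hu.dirDeriv v).differentiable (by simp)) hB y
  have : secondDiff v u x = -(w (x - v + v) - w (x - v)) := by
    simp only [w, secondDiff, sub_add_cancel]
    ring
  rw [this, abs_neg]
  exact abs_sub_le_of_abs_dirDeriv_le hw hdw (x - v)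

theorem abs_iterate_secondDiff_le {v : E} (m : ℕ) {u : E → ℝ} (hu : ContDiff ℝ ∞ u) {B : ℝ}
    (hB : ∀ y, |(dirDeriv v)^[2 * m] u y| ≤ B) (x : E) : |(secondDiff v)^[m] u x| ≤ B := by
  induction m generalizing u with
  | zero => simpa using hB x
  | succ m ih =>
    rw [iterate_succ_apply]
    refine ih (hu.secondDiff v) (fun y => ?_)
    rw [iterate_dirDeriv_secondDiff hu]
    refine abs_secondDiff_le (hu.iterate_dirDeriv v _) (fun z => ?_) y
    rw [← iterate_succ_apply' (dirDeriv v), ← iterate_succ_apply' (dirDeriv v)]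
    exact hB z

end DirectionalDerivative

section TrigonometricSum

def trigSum (c φ : ℝ) (h : VZ → ℝ) (ω : V) : ℝ :=
  ∑ᶠ k, h k * cos (c * (ω ⬝ᵥ toV k) + φ)

theorem toV_add (k l : VZ) : toV (k + l) = toV k + toV l := by
  ext i
  simp [toV]

theorem toV_sub (k l : VZ) : toV (k - l) = toV k - toV l := by
  ext i
  simp [toV]

theorem toV_single (j : Fin 3) : toV (Pi.single j 1) = Pi.single j 1 := by
  ext i
  by_cases h : i = j <;> simp [toV, h]

theorem trigSum_eq_sum {h : VZ → ℝ} {T : Finset VZ} (hT : support h ⊆ T) (c φ : ℝ) (ω : V) :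
    trigSum c φ h ω = ∑ k ∈ T, h k * cos (c * (ω ⬝ᵥ toV k) + φ) :=
  finsum_eq_finsetSum_of_support_subset _ ((support_mul_subset_left _ _).trans hT)

theorem trigSum_const_mul (a c φ : ℝ) (h : VZ → ℝ) (ω : V) :
    trigSum c φ (fun k => a * h k) ω = a * trigSum c φ h ω := by
  simp only [trigSum, mul_finsum, mul_assoc]

theorem abs_trigSum_le {h : VZ → ℝ} {T : Finset VZ} (hT : support h ⊆ T) {B : ℝ}
    (hB : ∀ k, |h k| ≤ B) (c φ : ℝ) (ω : V) : |trigSum c φ h ω| ≤ T.card * B := by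
  rw [trigSum_eq_sum hT, ← nsmul_eq_mul, ← Finset.sum_const]
  refine (Finset.abs_sum_le_sum_abs _ _).trans (Finset.sum_le_sum fun k _ => ?_)
  rw [abs_mul]
  exact (mul_le_of_le_one_right (abs_nonneg _) (abs_cos_le_one _)).trans (hB k)

theorem hasFDerivAt_dotProduct (w ω : V) :
    HasFDerivAt (fun ω : V => ω ⬝ᵥ w)
      (LinearMap.toContinuousLinearMap (dotProductEquiv ℝ (Fin 3) w) : V →L[ℝ] ℝ) ω := by
  convert (LinearMap.toContinuousLinearMap (dotProductEquiv ℝ (Fin 3) w)).hasFDerivAt using 1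
  ext ω
  simp [dotProduct_comm]

theorem pd_trigSum (c φ : ℝ) {h : VZ → ℝ} (hh : h.HasFiniteSupport) (j : Fin 3) :
    pd j (trigSum c φ h) = trigSum c (φ + π / 2) (fun k => c * k j * h k) := by
  ext ω
  have hT : support h ⊆ hh.toFinset := hh.coe_toFinset.symm.subset
  have hterm : ∀ k : VZ, HasFDerivAt (fun ω => h k * cos (c * (ω ⬝ᵥ toV k) + φ))
      (h k • (-sin (c * (ω ⬝ᵥ toV k) + φ)) •
        (c • (LinearMap.toContinuousLinearMap (dotProductEquiv ℝ (Fin 3) (toV k))))) ω :=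
    fun k => ((((hasFDerivAt_dotProduct (toV k) ω).const_mul c).add_const φ).cos).const_mul (h k)
  rw [pd, funext (trigSum_eq_sum hT c φ), (HasFDerivAt.fun_sum fun k _ => hterm k).fderiv,
    trigSum_eq_sum ((support_mul_subset_right _ _).trans hT), _root_.sum_apply]
  refine Finset.sum_congr rfl fun k _ => ?_
  simp only [_root_.smul_apply, LinearMap.coe_toContinuousLinearMap', dotProductEquiv_apply_apply,
    dotProduct_single, toV, mul_one, smul_eq_mul, neg_mul, mul_neg, ← add_assoc, cos_add_pi_div_two,
    neg_inj]
  ring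

theorem iterate_pd_trigSum (c φ : ℝ) {h : VZ → ℝ} (hh : h.HasFiniteSupport) (j : Fin 3)
    (n : ℕ) : (pd j)^[n] (trigSum c φ h) =
      trigSum c (φ + n * (π / 2)) (fun k => (c * k j) ^ n * h k) := by
  induction n with
  | zero => simp
  | succ n ih =>
    rw [iterate_succ_apply', ih, pd_trigSum _ _ (hh.fun_mul_right _)]
    congr 1
    · push_cast; ring
    · ext k; ring

theorem Dmulti_trigSum (c φ : ℝ) {h : VZ → ℝ} (hh : h.HasFiniteSupport) (α : Fin 3 → ℕ) :
    Dmulti α (trigSum c φ h) =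
      trigSum c (φ + (∑ i, α i : ℕ) * (π / 2)) (fun k => (∏ i, (c * k i) ^ α i) * h k) := by
  rw [Dmulti, iterate_pd_trigSum _ _ hh, iterate_pd_trigSum _ _ (hh.fun_mul_right _),
    iterate_pd_trigSum _ _ ((hh.fun_mul_right _).fun_mul_right _)]
  congr 1
  · simp only [Fin.sum_univ_three]; push_cast; ring
  · ext k; simp only [Fin.prod_univ_three]; ring

theorem trigSum_secondDiff (c φ : ℝ) {h : VZ → ℝ} (hh : h.HasFiniteSupport) (e : VZ) (ω : V) :
    trigSum c φ (secondDiff e h) ω = (2 - 2 * cos (c * (ω ⬝ᵥ toV e))) * trigSum c φ h ω := by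
  set F : VZ → ℝ := fun k => cos (c * (ω ⬝ᵥ toV k) + φ)
  have hF : ∀ k, F (k + e) + F (k - e) = 2 * cos (c * (ω ⬝ᵥ toV e)) * F k := fun k => by
    simp only [F, toV_add, toV_sub, dotProduct_add, dotProduct_sub]
    rw [show c * (ω ⬝ᵥ toV k + ω ⬝ᵥ toV e) + φ = c * (ω ⬝ᵥ toV k) + φ + c * (ω ⬝ᵥ toV e) by ring,
      show c * (ω ⬝ᵥ toV k - ω ⬝ᵥ toV e) + φ = c * (ω ⬝ᵥ toV k) + φ - c * (ω ⬝ᵥ toV e) by ring,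
      cos_add, cos_sub]
    ring
  have hhF : ∀ g : VZ → ℝ, HasFiniteSupport fun k => h k * g k := hh.fun_mul_left
  have hsub : HasFiniteSupport fun k => h (k - e) * F k :=
    (hh.comp_of_injective (sub_left_injective)).fun_mul_left F
  have hadd : HasFiniteSupport fun k => h (k + e) * F k :=
    (hh.comp_of_injective (add_left_injective e)).fun_mul_left F
  have h2 : HasFiniteSupport fun k => 2 * (h k * F k) := (hhF F).fun_mul_right _
  have shift_sub : ∑ᶠ k, h (k - e) * F k = ∑ᶠ k, h k * F (k + e) := by
    rw [← finsum_comp_equiv (Equiv.addRight e)]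
    simp
  have shift_add : ∑ᶠ k, h (k + e) * F k = ∑ᶠ k, h k * F (k - e) := by
    rw [← finsum_comp_equiv (Equiv.subRight e)]
    simp
  calc trigSum c φ (secondDiff e h) ω
      = ∑ᶠ k, (2 * (h k * F k) - h (k - e) * F k - h (k + e) * F k) :=
        finsum_congr fun k => by simp only [secondDiff, F]; ring
    _ = ∑ᶠ k, (2 * (h k * F k) - h k * F (k + e) - h k * F (k - e)) := by
        rw [finsum_sub_distrib (h2.fun_sub hsub) hadd, finsum_sub_distrib h2 hsub, shift_sub,
          shift_add, finsum_sub_distrib (h2.fun_sub (hhF _)) (hhF _), finsum_sub_distrib h2 (hhF _)]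
    _ = ∑ᶠ k, (2 - 2 * cos (c * (ω ⬝ᵥ toV e))) * (h k * F k) :=
        finsum_congr fun k => by linear_combination (-h k) * hF k
    _ = _ := (mul_finsum _ _).symm

theorem iterate_trigSum_secondDiff (c φ : ℝ) {h : VZ → ℝ} (hh : h.HasFiniteSupport) (e : VZ)
    (m : ℕ) (ω : V) : trigSum c φ ((secondDiff e)^[m] h) ω =
      (2 - 2 * cos (c * (ω ⬝ᵥ toV e))) ^ m * trigSum c φ h ω := by
  induction m with
  | zero => simp
  | succ m ih =>
    rw [iterate_succ_apply', trigSum_secondDiff _ _ (hh.iterate_secondDiff e m), ih, pow_succ',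
      mul_assoc]

end TrigonometricSum

section Lattice

def latticeScale (γ : ℝ) : VZ →+ V where
  toFun k i := γ * (k i : ℝ)
  map_zero' := by ext; simp
  map_add' k l := by ext; simp [mul_add]

theorem latticeScale_single (γ : ℝ) (j : Fin 3) :
    latticeScale γ (Pi.single j 1) = γ • (Pi.single j 1 : V) := by
  ext i
  by_cases h : i = j <;> simp [latticeScale, h]

theorem mem_ibox {M : ℕ} {k : VZ} : k ∈ ibox M ↔ ∀ i, |k i| ≤ M := by
  simp [ibox, abs_le]

theorem card_ibox (M : ℕ) : (ibox M).card = (2 * M + 1) ^ 3 := by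
  simp only [ibox, Fintype.card_piFinset, Int.card_Icc, Finset.prod_const, Finset.card_univ,
    Fintype.card_fin]
  congr 1
  omega

theorem support_comp_latticeScale_subset {u : V → ℝ} {R γ : ℝ} (hγ : 0 < γ)
    (hu : support u ⊆ closedBall 0 R) : support (u ∘ latticeScale γ) ⊆ ibox ⌊R / γ⌋₊ := by
  intro k hk
  have hnorm : ‖latticeScale γ k‖ ≤ R := mem_closedBall_zero_iff.mp (hu hk)
  refine mem_ibox.mpr fun i => ?_
  have hi : γ * |(k i : ℝ)| ≤ R := by
    simpa [latticeScale, abs_mul, abs_of_pos hγ] using (norm_le_pi_norm _ i).trans hnorm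
  have hlt : ((|k i| : ℤ) : ℝ) < ((⌊R / γ⌋₊ + 1 : ℕ) : ℝ) := by
    push_cast
    exact ((le_div_iff₀' hγ).mpr hi).trans_lt (Nat.lt_floor_add_one _)
  have := Int.cast_lt.mp hlt
  push_cast at this
  omega

theorem mul_card_ibox_le {R γ : ℝ} (hR : 0 ≤ R) (hγ : 0 < γ) :
    γ ^ 3 * (ibox ⌊R / γ⌋₊).card ≤ (2 * R + γ) ^ 3 := by
  have hfloor : γ * ⌊R / γ⌋₊ ≤ R := by
    rw [← le_div_iff₀' hγ]
    exact Nat.floor_le (by positivity)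
  rw [card_ibox, Nat.cast_pow, ← mul_pow]
  push_cast
  exact pow_le_pow_left₀ (by positivity) (by linarith) 3

end Lattice

section Bounds

open scoped ContDiff

theorem HasCompactSupport.iterate_dirDeriv {E : Type*} [NormedAddCommGroup E] [NormedSpace ℝ E]
    {u : E → ℝ} (hu : HasCompactSupport u) (v : E) (n : ℕ) :
    HasCompactSupport ((dirDeriv v)^[n] u) := by
  induction n with
  | zero => exact hu
  | succ n ih => rw [iterate_succ_apply']; exact ih.fderiv_apply ℝ v

theorem exists_abs_iterate_pd_le {u : V → ℝ} (hu : ContDiff ℝ ∞ u) (hcs : HasCompactSupport u)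
    (n : ℕ) : ∃ B > 0, ∀ j x, |(pd j)^[n] u x| ≤ B := by
  choose B hB using fun j : Fin 3 =>
    (hcs.iterate_dirDeriv (Pi.single j 1) n).exists_bound_of_continuous
      (hu.iterate_dirDeriv (Pi.single j 1) n).continuous
  refine ⟨1 + ∑ j, |B j|, by positivity, fun j x => (hB j x).trans ((le_abs_self _).trans ?_)⟩
  linarith [Finset.single_le_sum (fun i _ => abs_nonneg (B i)) (Finset.mem_univ j)]

theorem abs_trigSum_comp_latticeScale_le {u : V → ℝ} (hu : ContDiff ℝ ∞ u) {R : ℝ} (hR : 0 ≤ R)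
    (hsupp : support u ⊆ closedBall 0 R) (m : ℕ) (j : Fin 3) {B : ℝ}
    (hB : ∀ x, |(pd j)^[2 * m] u x| ≤ B) {γ : ℝ} (hγ : 0 < γ) (hγ1 : γ ≤ 1) (c φ : ℝ) (ξ : V) :
    γ ^ 3 * ((2 - 2 * cos (c * ξ j)) ^ m * |trigSum c φ (u ∘ latticeScale γ) ξ|) ≤
      (2 * (R + m) + 1) ^ 3 * (γ ^ (2 * m) * B) := by
  have hB0 : 0 ≤ B := (abs_nonneg _).trans (hB 0)
  set w := (secondDiff (γ • (Pi.single j 1 : V)))^[m] u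
  have hw : ∀ x, |w x| ≤ γ ^ (2 * m) * B := by
    refine abs_iterate_secondDiff_le m hu fun y => ?_
    rw [iterate_dirDeriv_smul_left, Pi.smul_apply, smul_eq_mul, abs_mul, abs_of_pos (by positivity)]
    exact mul_le_mul_of_nonneg_left (hB y) (by positivity)
  have hwsupp : support w ⊆ closedBall 0 (R + m) := by
    refine (support_iterate_secondDiff_subset hsupp _ m).trans (closedBall_subset_closedBall ?_)
    rw [norm_smul, Pi.norm_single, norm_one, mul_one, Real.norm_of_nonneg hγ.le]
    nlinarith [(Nat.cast_nonneg m : (0 : ℝ) ≤ m)]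
  have hfin : (u ∘ latticeScale γ).HasFiniteSupport :=
    (ibox _).finite_toSet.subset (support_comp_latticeScale_subset hγ hsupp)
  have hsum : (2 - 2 * cos (c * ξ j)) ^ m * trigSum c φ (u ∘ latticeScale γ) ξ =
      trigSum c φ (w ∘ latticeScale γ) ξ := by
    rw [← dotProduct_single_one ξ j, ← toV_single, ← iterate_trigSum_secondDiff _ _ hfin,
      iterate_secondDiff_comp, latticeScale_single]
  have hcos : 0 ≤ 2 - 2 * cos (c * ξ j) := by linarith [cos_le_one (c * ξ j)]
  rw [← abs_of_nonneg (pow_nonneg hcos m), ← abs_mul, hsum]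
  calc γ ^ 3 * |trigSum c φ (w ∘ latticeScale γ) ξ|
      ≤ γ ^ 3 * ((ibox ⌊(R + m) / γ⌋₊).card * (γ ^ (2 * m) * B)) :=
        mul_le_mul_of_nonneg_left
          (abs_trigSum_le (support_comp_latticeScale_subset hγ hwsupp) (fun k => hw _) c φ ξ)
          (by positivity)
    _ ≤ (2 * (R + m) + γ) ^ 3 * (γ ^ (2 * m) * B) := by
        rw [← mul_assoc]
        exact mul_le_mul_of_nonneg_right (mul_card_ibox_le (by positivity) hγ) (by positivity)
    _ ≤ (2 * (R + m) + 1) ^ 3 * (γ ^ (2 * m) * B) := by gcongr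

end Bounds

section RiemannSum

theorem abs_mul_sub_lt_of_mem_Icc_ceil {γ ρ a : ℝ} (hγ : 0 < γ) (hγρ : γ < ρ / 2) {k : ℤ}
    (hk : k ∈ Finset.Icc ⌈a / γ⌉ (⌈a / γ⌉ + ⌊ρ / (2 * γ)⌋₊)) : |γ * k - a| < ρ := by
  rw [Finset.mem_Icc] at hk
  have hlow : a ≤ γ * ⌈a / γ⌉ := (div_le_iff₀' hγ).mp (Int.le_ceil _)
  have hhigh : γ * ⌈a / γ⌉ < a + γ := by
    have := mul_lt_mul_of_pos_left (Int.ceil_lt_add_one (a / γ)) hγ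
    rwa [mul_add, mul_div_cancel₀ _ hγ.ne', mul_one] at this
  have hfloor : γ * ⌊ρ / (2 * γ)⌋₊ ≤ ρ / 2 := by
    rw [← le_div_iff₀' hγ, div_div, mul_comm 2 γ]
    exact Nat.floor_le (div_nonneg (by linarith) (by positivity))
  have h1 : (⌈a / γ⌉ : ℝ) ≤ k := by exact_mod_cast hk.1
  have h2 : (k : ℝ) ≤ ⌈a / γ⌉ + ⌊ρ / (2 * γ)⌋₊ := by exact_mod_cast hk.2
  rw [abs_lt]
  constructor <;> nlinarith

/-- `u ≥ u x₀ / 2` on a sup-norm ball of radius `ρ` around `x₀`, which contains at least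
`(ρ / 2γ)³` points of the lattice `γℤ³`. -/
theorem exists_le_finsum_comp_latticeScale {u : V → ℝ} (hu : Continuous u) (hu0 : ∀ x, 0 ≤ u x)
    {R : ℝ} (hsupp : support u ⊆ closedBall 0 R) {x₀ : V} (hx₀ : 0 < u x₀) :
    ∃ c₀ > 0, ∃ γ₁ > 0, ∀ γ ∈ Set.Ioo 0 γ₁, c₀ ≤ ∑ᶠ k, γ ^ 3 * u (latticeScale γ k) := by
  obtain ⟨ρ, hρ, hball⟩ : ∃ ρ > 0, ∀ y, dist y x₀ < ρ → u x₀ / 2 < u y :=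
    Metric.eventually_nhds_iff.mp (continuousAt_const.eventually_lt hu.continuousAt (by linarith))
  refine ⟨u x₀ / 2 * (ρ / 2) ^ 3, by positivity, ρ / 2, by positivity, fun γ ⟨hγ, hγρ⟩ => ?_⟩
  set n := ⌊ρ / (2 * γ)⌋₊
  set P : Finset VZ := Fintype.piFinset fun i => Finset.Icc ⌈x₀ i / γ⌉ (⌈x₀ i / γ⌉ + n)
  have hP : ∀ k ∈ P, γ ^ 3 * (u x₀ / 2) ≤ γ ^ 3 * u (latticeScale γ k) := fun k hk =>
    mul_le_mul_of_nonneg_left (hball _ ((dist_pi_lt_iff hρ).2 fun i => by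
      rw [Real.dist_eq]
      exact abs_mul_sub_lt_of_mem_Icc_ceil hγ hγρ (Fintype.mem_piFinset.1 hk i))).le (by positivity)
  have hcard : (P.card : ℝ) = (n + 1) ^ 3 := by
    have hlen : ∀ q : ℤ, (q + n + 1 - q).toNat = n + 1 := fun q => by omega
    simp [P, Fintype.card_piFinset, Int.card_Icc, hlen]
  have hn : ρ / 2 ≤ γ * (n + 1) := by
    have hlt := mul_lt_mul_of_pos_left (Nat.lt_floor_add_one (ρ / (2 * γ))) hγ
    have hρ2 : γ * (ρ / (2 * γ)) = ρ / 2 := by field_simp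
    linarith
  have hfin : (fun k => γ ^ 3 * u (latticeScale γ k)).HasFiniteSupport :=
    ((ibox _).finite_toSet.subset (support_comp_latticeScale_subset hγ hsupp)).subset
      (support_mul_subset_right _ _)
  rw [finsum_eq_finsetSum_of_support_subset _ (s := hfin.toFinset ∪ P)
    (by simp [Set.Finite.coe_toFinset])]
  calc u x₀ / 2 * (ρ / 2) ^ 3 ≤ P.card * (γ ^ 3 * (u x₀ / 2)) := by
        rw [hcard]
        nlinarith [pow_le_pow_left₀ (by positivity) hn 3]
    _ ≤ ∑ k ∈ P, γ ^ 3 * u (latticeScale γ k) := by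
        rw [← nsmul_eq_mul]
        exact Finset.card_nsmul_le_sum _ _ _ hP
    _ ≤ ∑ k ∈ hfin.toFinset ∪ P, γ ^ 3 * u (latticeScale γ k) :=
        Finset.sum_le_sum_of_subset_of_nonneg Finset.subset_union_right fun k _ _ =>
          mul_nonneg (by positivity) (hu0 _)

end RiemannSum

section KacKernel

open scoped ContDiff in
theorem KacKernel.contDiff {rstar : ℝ} {K : V → ℝ} (hK : KacKernel rstar K) : ContDiff ℝ ∞ K :=
  contDiff_infty.2 hK.smooth

open scoped ContDiff in
theorem KacKernel.contDiff_monomial_mul {rstar : ℝ} {K : V → ℝ} (hK : KacKernel rstar K)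
    (α : Fin 3 → ℕ) : ContDiff ℝ ∞ fun x : V => (∏ i, x i ^ α i) * K x :=
  (contDiff_prod fun i _ => (contDiff_apply ℝ ℝ i).pow (α i)).mul hK.contDiff

variable {rstar : ℝ} {K : V → ℝ}

theorem norm_le_euclNorm (x : V) : ‖x‖ ≤ euclNorm x := by
  refine (pi_norm_le_iff_of_nonneg (Real.sqrt_nonneg _)).2 fun i => ?_
  rw [Real.norm_eq_abs, ← Real.sqrt_sq_eq_abs]
  exact Real.sqrt_le_sqrt (Finset.single_le_sum (fun i _ => sq_nonneg (x i)) (Finset.mem_univ i))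

theorem KacKernel.support_subset (hK : KacKernel rstar K) : support K ⊆ closedBall 0 rstar :=
  fun x hx => mem_closedBall_zero_iff.2
    ((norm_le_euclNorm x).trans_lt (not_le.1 fun h => hx (hK.support_ball x h))).le

theorem KacKernel.exists_pos_s10 (hK : KacKernel rstar K) : ∃ x, 0 < K x := by
  by_contra! h
  have : K = 0 := funext fun x => le_antisymm (h x) (hK.nonneg x)
  simpa [this] using hK.integral_one

theorem KacKernel.exists_kappa1_le (hK : KacKernel rstar K) :
    ∃ C > 0, ∃ γ₁ > 0, ∀ γ ∈ Set.Ioo 0 γ₁, 0 < kappa1 K γ ∧ kappa1 K γ ≤ C := by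
  obtain ⟨x₀, hx₀⟩ := hK.exists_pos_s10
  obtain ⟨c₀, hc₀, γ₁, hγ₁, hsum⟩ := exists_le_finsum_comp_latticeScale hK.contDiff.continuous
    hK.nonneg hK.support_subset hx₀
  exact ⟨c₀⁻¹, inv_pos.2 hc₀, γ₁, hγ₁, fun γ hγ =>
    ⟨inv_pos.2 (hc₀.trans_le (hsum γ hγ)), inv_anti₀ hc₀ (hsum γ hγ)⟩⟩

theorem Khat_eq_trigSum (K : V → ℝ) (γ : ℝ) :
    Khat K γ = trigSum (π * γ ^ 4) 0 (fun k => kappa1 K γ * γ ^ 3 * K (latticeScale γ k)) := by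
  ext ω
  simp only [Khat, trigSum, mul_finsum, mul_assoc]
  refine finsum_congr fun k => ?_
  simp only [dotProduct, toV, Finset.mul_sum, add_zero]
  congr 4
  exact Finset.sum_congr rfl fun i _ => by ring

theorem Dmulti_Khat (hK : KacKernel rstar K) {γ : ℝ} (hγ : 0 < γ) (α : Fin 3 → ℕ) (ω : V) :
    Dmulti α (Khat K γ) ω = kappa1 K γ * γ ^ 3 * (π * γ ^ 3) ^ (∑ i, α i) *
      trigSum (π * γ ^ 4) ((∑ i, α i : ℕ) * (π / 2))
        ((fun x => (∏ i, x i ^ α i) * K x) ∘ latticeScale γ) ω := by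
  have hfin : HasFiniteSupport fun k => kappa1 K γ * γ ^ 3 * K (latticeScale γ k) :=
    ((ibox _).finite_toSet.subset (support_comp_latticeScale_subset hγ hK.support_subset)).subset
      (support_mul_subset_right _ _)
  have hprod : ∀ k : VZ, ∏ i, (π * γ ^ 4 * k i) ^ α i =
      (π * γ ^ 3) ^ (∑ i, α i) * ∏ i, (γ * k i) ^ α i := fun k => by
    rw [← Finset.prod_pow_eq_pow_sum, ← Finset.prod_mul_distrib]
    exact Finset.prod_congr rfl fun i _ => by ring
  rw [Khat_eq_trigSum, Dmulti_trigSum _ _ hfin, zero_add, ← trigSum_const_mul]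
  congr 1
  ext k
  simp only [hprod, Function.comp_apply, latticeScale, AddMonoidHom.coe_mk, ZeroHom.coe_mk]
  ring

end KacKernel

section Decay

variable {rstar : ℝ} {K : V → ℝ}

theorem KacKernel.exists_abs_Dmulti_Khat_le (hK : KacKernel rstar K) (hrstar : 0 ≤ rstar)
    (α : Fin 3 → ℕ) (m : ℕ) :
    ∃ M > 0, ∃ γ₁ > 0, ∀ γ ∈ Set.Ioo 0 γ₁, ∀ ω j,
      (2 - 2 * cos (π * γ ^ 4 * ω j)) ^ m * |Dmulti α (Khat K γ) ω| ≤
        M * γ ^ (2 * m) * γ ^ (3 * ∑ i, α i) := by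
  set G : V → ℝ := fun x => (∏ i, x i ^ α i) * K x
  have hG := hK.contDiff_monomial_mul α
  have hGsupp : support G ⊆ closedBall 0 rstar :=
    (support_mul_subset_right _ _).trans hK.support_subset
  obtain ⟨B, hB, hBbound⟩ := exists_abs_iterate_pd_le hG
    (.of_support_subset_isCompact (isCompact_closedBall 0 rstar) hGsupp) (2 * m)
  obtain ⟨C, hC, γ₁, hγ₁, hκ⟩ := hK.exists_kappa1_le
  refine ⟨C * π ^ (∑ i, α i) * ((2 * (rstar + m) + 1) ^ 3 * B), by positivity, min γ₁ 1,
    by positivity, fun γ ⟨hγ, hγ1⟩ ω j => ?_⟩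
  obtain ⟨hκpos, hκC⟩ := hκ γ ⟨hγ, hγ1.trans_le (min_le_left _ _)⟩
  have hS := abs_trigSum_comp_latticeScale_le hG hrstar hGsupp m j (hBbound j) hγ
    (hγ1.le.trans (min_le_right _ _)) (π * γ ^ 4) ((∑ i, α i : ℕ) * (π / 2)) ω
  rw [Dmulti_Khat hK hγ, abs_mul, abs_of_nonneg (by positivity)]
  calc _ = kappa1 K γ * π ^ (∑ i, α i) * γ ^ (3 * ∑ i, α i) *
        (γ ^ 3 * ((2 - 2 * cos (π * γ ^ 4 * ω j)) ^ m *
          |trigSum (π * γ ^ 4) ((∑ i, α i : ℕ) * (π / 2)) (G ∘ latticeScale γ) ω|)) := by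
        rw [mul_pow, ← pow_mul, mul_comm 3 (∑ i, α i)]
        ring
    _ ≤ C * π ^ (∑ i, α i) * γ ^ (3 * ∑ i, α i) *
        ((2 * (rstar + m) + 1) ^ 3 * (γ ^ (2 * m) * B)) := by
        have hcos : 0 ≤ 2 - 2 * cos (π * γ ^ 4 * ω j) := by linarith [cos_le_one (π * γ ^ 4 * ω j)]
        gcongr
    _ = _ := by ring

theorem sq_le_mul_one_sub_cos {θ : ℝ} (hθ : |θ| ≤ 7 / 2) : θ ^ 2 ≤ 13 * (1 - cos θ) := by
  rcases le_or_gt |θ| π with hπ | hπ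
  · have hcos := cos_le_one_sub_mul_cos_sq hπ
    have hπ2 : π ^ 2 < 16 := by nlinarith [pi_lt_four, pi_pos]
    have h1 : 2 / π ^ 2 * θ ^ 2 ≤ 1 - cos θ := by linarith
    rw [div_mul_eq_mul_div, div_le_iff₀ (by positivity)] at h1
    nlinarith [cos_le_one θ]
  · have hcos : cos θ ≤ 0 := by
      rw [← cos_abs]
      exact cos_nonpos_of_pi_div_two_le_of_le (by linarith [pi_pos]) (by linarith [pi_gt_three])
    nlinarith [sq_abs θ, abs_nonneg θ]

theorem exists_sq_mul_euclNorm_le {γ : ℝ} (hγ : 0 < γ) (hγ2 : γ ≤ 1 / 2) {ω : V}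
    (hω : ∀ i, |ω i| ≤ Ndef γ + 1 / 2) :
    ∃ j, (γ ^ 4 * euclNorm ω) ^ 2 ≤ 3 * (2 - 2 * cos (π * γ ^ 4 * ω j)) := by
  obtain ⟨j, -, hj⟩ := Finset.exists_max_image Finset.univ (fun i => |ω i|) Finset.univ_nonempty
  refine ⟨j, ?_⟩
  have hnorm : euclNorm ω ^ 2 ≤ 3 * ω j ^ 2 := by
    have hsq : ∀ i, ω i ^ 2 ≤ ω j ^ 2 := fun i => sq_le_sq.2 (hj i (Finset.mem_univ i))
    rw [euclNorm, Real.sq_sqrt (by positivity), Fin.sum_univ_three]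
    linarith [hsq 0, hsq 1, hsq 2]
  have hN : γ ^ 4 * Ndef γ ≤ 1 := by
    calc γ ^ 4 * Ndef γ ≤ γ ^ 4 * γ⁻¹ ^ 4 := by gcongr; exact Nat.floor_le (by positivity)
      _ = 1 := by rw [← mul_pow, mul_inv_cancel₀ hγ.ne', one_pow]
  have hγ4 : γ ^ 4 ≤ 1 / 16 := by
    calc γ ^ 4 ≤ (1 / 2) ^ 4 := by gcongr
      _ = 1 / 16 := by norm_num
  have hθ : |π * γ ^ 4 * ω j| ≤ 7 / 2 := by
    have hωj : γ ^ 4 * |ω j| ≤ 1 + 1 / 32 := by nlinarith [hω j, pow_pos hγ 4]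
    rw [abs_mul, abs_of_pos (by positivity), mul_assoc]
    nlinarith [pi_lt_d2, pi_pos]
  have hphase : 9 * (γ ^ 4 * ω j) ^ 2 ≤ 13 * (1 - cos (π * γ ^ 4 * ω j)) :=
    calc 9 * (γ ^ 4 * ω j) ^ 2 ≤ π ^ 2 * (γ ^ 4 * ω j) ^ 2 := by gcongr; nlinarith [pi_gt_three]
      _ = (π * γ ^ 4 * ω j) ^ 2 := by ring
      _ ≤ _ := sq_le_mul_one_sub_cos hθ
  calc (γ ^ 4 * euclNorm ω) ^ 2 = γ ^ 8 * euclNorm ω ^ 2 := by ring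
    _ ≤ γ ^ 8 * (3 * ω j ^ 2) := by gcongr
    _ = 3 * (γ ^ 4 * ω j) ^ 2 := by ring
    _ ≤ 3 * (2 - 2 * cos (π * γ ^ 4 * ω j)) := by nlinarith [cos_le_one (π * γ ^ 4 * ω j)]

end Decay

/-- Polynomial decay of all derivatives of `K̂_γ` beyond the scale
`|ω| ≳ γ⁻³`: `|γ³ω|^{2m} |D^k K̂_γ(ω)| ≤ C γ^{3|k|₁}` on `[−N−1/2, N+1/2]³`. -/
theorem Khat_derivative_decay (rstar : ℝ) (hrstar : 0 < rstar)
    (K : V → ℝ) (hK : KacKernel rstar K) :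
    ∀ k : Fin 3 → ℕ, ∀ m : ℕ, ∃ C > (0 : ℝ), ∃ γ₀ > (0 : ℝ),
      ∀ γ ∈ Set.Ioo (0 : ℝ) γ₀, ∀ ω : V, (∀ i, |ω i| ≤ (Ndef γ : ℝ) + 1 / 2) →
        (γ ^ 3 * euclNorm ω) ^ (2 * m) * |Dmulti k (Khat K γ) ω| ≤
          C * γ ^ (3 * (k 0 + k 1 + k 2)) := by
  intro α m
  obtain ⟨M, hM, γ₁, hγ₁, hbound⟩ := hK.exists_abs_Dmulti_Khat_le hrstar.le α m
  refine ⟨3 ^ m * M, by positivity, min γ₁ (1 / 2), by positivity, fun γ ⟨hγ, hγlt⟩ ω hω => ?_⟩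
  obtain ⟨j, hj⟩ := exists_sq_mul_euclNorm_le hγ (hγlt.le.trans (min_le_right _ _)) hω
  have hD := hbound γ ⟨hγ, hγlt.trans_le (min_le_left _ _)⟩ ω j
  have hweight : (γ ^ 4 * euclNorm ω) ^ (2 * m) ≤
      3 ^ m * (2 - 2 * cos (π * γ ^ 4 * ω j)) ^ m := by
    rw [pow_mul, ← mul_pow]
    exact pow_le_pow_left₀ (sq_nonneg _) hj m
  refine le_of_mul_le_mul_left ?_ (pow_pos hγ (2 * m))
  calc γ ^ (2 * m) * ((γ ^ 3 * euclNorm ω) ^ (2 * m) * |Dmulti α (Khat K γ) ω|)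
      = (γ ^ 4 * euclNorm ω) ^ (2 * m) * |Dmulti α (Khat K γ) ω| := by ring
    _ ≤ 3 ^ m * ((2 - 2 * cos (π * γ ^ 4 * ω j)) ^ m * |Dmulti α (Khat K γ) ω|) := by
        rw [← mul_assoc]
        exact mul_le_mul_of_nonneg_right hweight (abs_nonneg _)
    _ ≤ 3 ^ m * (M * γ ^ (2 * m) * γ ^ (3 * ∑ i, α i)) := by gcongr
    _ = _ := by rw [Fin.sum_univ_three]; ring
end
end
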